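/- arXiv:2106.10396 — 3 statements merged into one kernel-verified Lean document; each statement's English description precedes it below -/
import Mathlib

section
/- Let m_p > 0, k_θ > 0, k_g > 0 be real parameters and let ω_s, v, P, P_ac be real numbers satisfying the steady-state equations of a single lossless dc/ac converter with power-balancing dual-port grid-forming control and no dc network connection: P = -k_g·v, 0 = P - P_ac, and ω_s = -m_p·P_ac + k_θ·v. Then ω_s = -(m_p + k_θ/k_g)·P_ac, i.e., the control realizes a P_ac–f droop characteristic with effective droop coefficient m_p + k_θ/k_g. -/
/-- A lossless dc/ac converter with power-balancing dual-port GFM control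
and no dc network connection realizes a `P_ac`–`f` droop characteristic with
effective droop coefficient `m_p + k_θ / k_g`. -/
theorem dual_port_gfm_droop_characteristic
    (mp kθ kg ωs v P Pac : ℝ)
    (hmp : 0 < mp) (hkθ : 0 < kθ) (hkg : 0 < kg)
    (hsource : P = -kg * v)
    (hdclink : 0 = P - Pac)
    (hctrl : ωs = -mp * Pac + kθ * v) :
    ωs = -(mp + kθ / kg) * Pac := by
  have : v = -Pac / kg := by
    field_simp
    linarith
  subst this
  field_simp at hctrl ⊢
  linarith
end

section
/- Let m_1, m_2, m_3, b_1, b_2, d_1 be positive reals with b_2/b_1 = m_3/m_2 and set ζ = √(b_1/m_2). Consider the linear ODE on ℝ⁵ with state (η_1, η_2, ω_1, ω_2, ω_3): dη/dt = Bᵀω, M·dω/dt = -B·W·η - D·ω, where B is the 3×2 matrix with rows (1,1), (-1,0), (0,-1), W = diag(b_1, b_2), M = diag(m_1, m_2, m_3), and D = diag(d_1, 0, 0). Then the functions η_1(t) = (b_2/b_1)·cos(ζt), η_2(t) = -cos(ζt), ω_1(t) = 0, ω_2(t) = (b_2/√(b_1·m_2))·sin(ζt), ω_3(t) = -ζ·sin(ζt)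 form a solution of this ODE, and this solution does not converge to the origin as t → ∞; consequently the origin of the system is not asymptotically stable. -/
/-- `IsSolution m1 m2 m3 b1 b2 d1 η1 η2 ω1 ω2 ω3` states that the functions
`η1, η2, ω1, ω2, ω3 : ℝ → ℝ` solve the three-machine linear ODE
`dη/dt = Bᵀω`, `M·dω/dt = -B·W·η - D·ω` with
`B = [(1,1);(-1,0);(0,-1)]`, `W = diag(b1,b2)`, `M = diag(m1,m2,m3)`,
`D = diag(d1,0,0)`. -/
def IsSolution (m1 m2 m3 b1 b2 d1 : ℝ) (η1 η2 ω1 ω2 ω3 : ℝ → ℝ) : Prop :=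
  ∀ t : ℝ,
    HasDerivAt η1 (ω1 t - ω2 t) t ∧
    HasDerivAt η2 (ω1 t - ω3 t) t ∧
    HasDerivAt ω1 ((-(b1 * η1 t + b2 * η2 t) - d1 * ω1 t) / m1) t ∧
    HasDerivAt ω2 (b1 * η1 t / m2) t ∧
    HasDerivAt ω3 (b2 * η2 t / m3) t

/-! Since `b2/b1 = m3/m2`, machines 2 and 3 can swing against each other at the common
frequency `ζ = √(b1/m2) = √(b2/m3)` while the power flows into machine 1 cancel, so machine 1
stays at rest and its damping never acts. -/

open Filter Real Topology

lemma hasDerivAt_cos_mul (ζ t : ℝ) :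
    HasDerivAt (fun t => cos (ζ * t)) (-(ζ * sin (ζ * t))) t :=
  (((hasDerivAt_id t).const_mul ζ).cos).congr_deriv (by simp only [id]; ring)

lemma hasDerivAt_sin_mul (ζ t : ℝ) :
    HasDerivAt (fun t => sin (ζ * t)) (ζ * cos (ζ * t)) t :=
  (((hasDerivAt_id t).const_mul ζ).sin).congr_deriv (by simp only [id]; ring)

lemma isSolution_normalMode (m1 m2 m3 b1 b2 d1 a c ζ : ℝ)
    (hbalance : b1 * a = b2) (hc : c = a * ζ)
    (hζ2 : ζ ^ 2 = b1 / m2) (hζ3 : ζ ^ 2 = b2 / m3) :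
    IsSolution m1 m2 m3 b1 b2 d1
      (fun t => a * cos (ζ * t)) (fun t => -cos (ζ * t)) (fun _ => 0)
      (fun t => c * sin (ζ * t)) (fun t => -ζ * sin (ζ * t)) := by
  intro t
  refine ⟨?_, ?_, ?_, ?_, ?_⟩
  · exact ((hasDerivAt_cos_mul ζ t).const_mul a).congr_deriv (by rw [hc]; ring)
  · exact (hasDerivAt_cos_mul ζ t).neg.congr_deriv (by ring)
  · exact (hasDerivAt_const t (0 : ℝ)).congr_deriv (by rw [← hbalance]; ring)
  · refine ((hasDerivAt_sin_mul ζ t).const_mul c).congr_deriv ?_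
    linear_combination (a * cos (ζ * t)) * hζ2 + ζ * cos (ζ * t) * hc
  · refine ((hasDerivAt_sin_mul ζ t).const_mul (-ζ)).congr_deriv ?_
    linear_combination -(cos (ζ * t)) * hζ3

/-- `cos (2x) = 2 cos² x - 1` would force the limit to be `-1` as well. -/
lemma not_tendsto_cos_mul_atTop_nhds_zero (ζ : ℝ) :
    ¬ Tendsto (fun t => cos (ζ * t)) atTop (𝓝 0) := by
  intro h
  have h_double : Tendsto (fun t => cos (ζ * (2 * t))) atTop (𝓝 0) :=
    h.comp (tendsto_id.const_mul_atTop two_pos)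
  have h_sq : Tendsto (fun t => cos (ζ * (2 * t))) atTop (𝓝 (-1)) := by
    simpa [mul_left_comm ζ 2, cos_two_mul] using ((h.pow 2).const_mul 2).sub_const 1
  exact absurd (tendsto_nhds_unique h_double h_sq) (by norm_num)

theorem three_machine_not_asymptotically_stable_general
    (m1 m2 m3 b1 b2 d1 : ℝ)
    (hm2 : 0 < m2) (hm3 : 0 < m3)
    (hb1 : 0 < b1)
    (hratio : b2 / b1 = m3 / m2)
    (ζ : ℝ) (hζ : ζ = Real.sqrt (b1 / m2)) :
    IsSolution m1 m2 m3 b1 b2 d1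
      (fun t => (b2 / b1) * Real.cos (ζ * t))
      (fun t => -Real.cos (ζ * t))
      (fun _ => 0)
      (fun t => (b2 / Real.sqrt (b1 * m2)) * Real.sin (ζ * t))
      (fun t => -ζ * Real.sin (ζ * t))
    ∧ ¬ Filter.Tendsto
        (fun t => ((b2 / b1) * Real.cos (ζ * t), -Real.cos (ζ * t), (0 : ℝ),
          (b2 / Real.sqrt (b1 * m2)) * Real.sin (ζ * t), -ζ * Real.sin (ζ * t)))
        Filter.atTop (nhds 0)
    ∧ ¬ (∀ η1 η2 ω1 ω2 ω3 : ℝ → ℝ,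
          IsSolution m1 m2 m3 b1 b2 d1 η1 η2 ω1 ω2 ω3 →
          Filter.Tendsto (fun t => (η1 t, η2 t, ω1 t, ω2 t, ω3 t))
            Filter.atTop (nhds 0)) := by
  have hζ2 : ζ ^ 2 = b1 / m2 := by rw [hζ, sq_sqrt (div_pos hb1 hm2).le]
  have hζ3 : ζ ^ 2 = b2 / m3 := by
    rw [hζ2, div_eq_div_iff hm2.ne' hm3.ne']
    linear_combination -((div_eq_div_iff hb1.ne' hm2.ne').1 hratio)
  have hc : b2 / sqrt (b1 * m2) = b2 / b1 * ζ := by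
    have hζ_sqrt : ζ * sqrt (b1 * m2) = b1 := by
      rw [hζ, ← sqrt_mul (div_pos hb1 hm2).le, show b1 / m2 * (b1 * m2) = b1 ^ 2 by field_simp,
        sqrt_sq hb1.le]
    have : sqrt (b1 * m2) ≠ 0 := (sqrt_pos.2 (mul_pos hb1 hm2)).ne'
    rw [div_eq_iff this, mul_assoc, hζ_sqrt, div_mul_cancel₀ _ hb1.ne']
  have hsol := isSolution_normalMode m1 m2 m3 b1 b2 d1 (b2 / b1) (b2 / sqrt (b1 * m2)) ζ
    (mul_div_cancel₀ b2 hb1.ne') hc hζ2 hζ3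
  have hnot : ¬ Tendsto (fun t => ((b2 / b1) * cos (ζ * t), -cos (ζ * t), (0 : ℝ),
      (b2 / sqrt (b1 * m2)) * sin (ζ * t), -ζ * sin (ζ * t))) atTop (𝓝 0) := fun h =>
    not_tendsto_cos_mul_atTop_nhds_zero ζ (by simpa using h.snd_nhds.fst_nhds.neg)
  exact ⟨hsol, hnot, fun hall => hnot (hall _ _ _ _ _ hsol)⟩

/-- Example 1: for the three-machine system with `b2/b1 = m3/m2` there exists an
explicit oscillatory solution that does not converge to the origin; hence the
origin is not asymptotically stable. -/
theorem three_machine_not_asymptotically_stable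
    (m1 m2 m3 b1 b2 d1 : ℝ)
    (hm1 : 0 < m1) (hm2 : 0 < m2) (hm3 : 0 < m3)
    (hb1 : 0 < b1) (hb2 : 0 < b2) (hd1 : 0 < d1)
    (hratio : b2 / b1 = m3 / m2)
    (ζ : ℝ) (hζ : ζ = Real.sqrt (b1 / m2)) :
    IsSolution m1 m2 m3 b1 b2 d1
      (fun t => (b2 / b1) * Real.cos (ζ * t))
      (fun t => -Real.cos (ζ * t))
      (fun _ => 0)
      (fun t => (b2 / Real.sqrt (b1 * m2)) * Real.sin (ζ * t))
      (fun t => -ζ * Real.sin (ζ * t))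
    ∧ ¬ Filter.Tendsto
        (fun t => ((b2 / b1) * Real.cos (ζ * t), -Real.cos (ζ * t), (0 : ℝ),
          (b2 / Real.sqrt (b1 * m2)) * Real.sin (ζ * t), -ζ * Real.sin (ζ * t)))
        Filter.atTop (nhds 0)
    ∧ ¬ (∀ η1 η2 ω1 ω2 ω3 : ℝ → ℝ,
          IsSolution m1 m2 m3 b1 b2 d1 η1 η2 ω1 ω2 ω3 →
          Filter.Tendsto (fun t => (η1 t, η2 t, ω1 t, ω2 t, ω3 t))
            Filter.atTop (nhds 0)) :=
  three_machine_not_asymptotically_stable_general m1 m2 m3 b1 b2 d1 hm2 hm3 hb1 hratio ζ hζ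
end

section
/- Let A be a real n×n matrix and Q a real n×n symmetric positive definite matrix such that QA + AᵀQ = -S where S is symmetric positive semidefinite. Suppose the only vector x ∈ ℝⁿ satisfying S·Aᵏ·x = 0 for all integers k ≥ 0 is x = 0 (equivalently, ⋂_{k=0}^{n-1} ker(S·Aᵏ) = {0}). Then every solution of dx/dt = A·x converges to the origin, i.e., e^{tA}·x₀ → 0 as t → ∞ for every x₀ ∈ ℝⁿ, and hence the origin is asymptotically stable. -/
/-!
Along a trajectory `x t = exp (t • A) *ᵥ x₀` the function `V = x ⬝ᵥ Q *ᵥ x` has derivative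
`-(x ⬝ᵥ S *ᵥ x) ≤ 0`, so it is nonincreasing; since `Q` is positive definite this already gives
Lyapunov stability. The decrease of `V` over unit time, `y ↦ V y - V (exp A *ᵥ y)`, is positive
off zero: if it vanished at `y`, `V` would be constant on `[0, 1]`, so `S *ᵥ x t = 0` on `(0, 1)`;
differentiating repeatedly gives `S * A ^ k *ᵥ x t = 0` for all `k`, hence `y = 0` by
observability. Being continuous and 2-homogeneous, this decrease is then at least `c * ‖y‖ ^ 2`
for some `c > 0` (its minimum on the unit sphere), so `c * ‖x t‖ ^ 2 ≤ V t - V (t + 1) → 0`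
because the monotone `V` converges.
-/

open Matrix Filter Topology NormedSpace

theorem exists_pos_mul_sq_norm_le_of_homogeneous {E : Type*} [NormedAddCommGroup E]
    [NormedSpace ℝ E] [ProperSpace E] {f : E → ℝ} (hf : Continuous f)
    (hsmul : ∀ (c : ℝ) (y : E), f (c • y) = c ^ 2 * f y) (hpos : ∀ y ≠ 0, 0 < f y) :
    ∃ c > 0, ∀ y, c * ‖y‖ ^ 2 ≤ f y := by
  have hf0 : f 0 = 0 := by simpa using hsmul 0 0
  obtain hE | hE := subsingleton_or_nontrivial E
  · exact ⟨1, one_pos, fun y => by simp [Subsingleton.elim y 0, hf0]⟩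
  obtain ⟨y₀, hy₀, hmin⟩ := (isCompact_sphere (0 : E) 1).exists_isMinOn
    (NormedSpace.sphere_nonempty.2 zero_le_one) hf.continuousOn
  refine ⟨f y₀, hpos y₀ (ne_zero_of_mem_unit_sphere ⟨y₀, hy₀⟩), fun y => ?_⟩
  rcases eq_or_ne y 0 with rfl | hy
  · simp [hf0]
  have hu : ‖y‖⁻¹ • y ∈ Metric.sphere (0 : E) 1 := by simp [norm_smul, hy]
  calc f y₀ * ‖y‖ ^ 2 ≤ f (‖y‖⁻¹ • y) * ‖y‖ ^ 2 := by gcongr; exact hmin hu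
    _ = f y := by rw [hsmul, inv_pow, mul_comm, ← mul_assoc, mul_inv_cancel₀ (by simpa), one_mul]

section Calculus

variable {𝕜 ι κ : Type*} [NontriviallyNormedField 𝕜] [Fintype ι] {x y : 𝕜 → ι → 𝕜}
  {x' y' : ι → 𝕜} {t : 𝕜}

theorem HasDerivAt.dotProduct (hx : HasDerivAt x x' t) (hy : HasDerivAt y y' t) :
    HasDerivAt (fun s => x s ⬝ᵥ y s) (x' ⬝ᵥ y t + x t ⬝ᵥ y') t := by
  simpa only [_root_.dotProduct, ← Finset.sum_add_distrib] using
    HasDerivAt.fun_sum (u := Finset.univ) fun i _ =>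
      (hasDerivAt_pi.1 hx i).fun_mul (hasDerivAt_pi.1 hy i)

theorem HasDerivAt.matrix_mulVec (M : Matrix κ ι 𝕜) (hx : HasDerivAt x x' t) :
    HasDerivAt (fun s => M *ᵥ x s) (M *ᵥ x') t :=
  hasDerivAt_pi.2 fun i => by
    have := (hasDerivAt_const t (M i)).dotProduct hx
    rw [zero_dotProduct, zero_add] at this
    exact this

theorem HasDerivAt.eq_zero_of_eventuallyEq_const {F : Type*} [NormedAddCommGroup F]
    [NormedSpace 𝕜 F] {f : 𝕜 → F} {f' : F} {c : F} (hf : HasDerivAt f f' t)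
    (h : f =ᶠ[𝓝 t] fun _ => c) : f' = 0 :=
  (hf.congr_of_eventuallyEq h.symm).unique (hasDerivAt_const t c)

end Calculus

section LinearFlow

variable {ι : Type*} [Fintype ι] [DecidableEq ι] (A : Matrix ι ι ℝ)

attribute [local instance] Matrix.linftyOpNormedRing Matrix.linftyOpNormedAlgebra in
theorem hasDerivAt_exp_smul_mulVec (x₀ : ι → ℝ) (t : ℝ) :
    HasDerivAt (fun s : ℝ => exp (s • A) *ᵥ x₀) (A *ᵥ (exp (t • A) *ᵥ x₀)) t := by
  rw [mulVec_mulVec]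
  exact ((mulVecBilin ℝ ℝ).flip x₀).toContinuousLinearMap.hasFDerivAt.comp_hasDerivAt t
    (hasDerivAt_exp_smul_const' A t)

theorem exp_add_smul_mulVec (s t : ℝ) (x₀ : ι → ℝ) :
    exp ((s + t) • A) *ᵥ x₀ = exp (s • A) *ᵥ (exp (t • A) *ᵥ x₀) := by
  rw [add_smul, Matrix.exp_add_of_commute _ _ (((Commute.refl A).smul_left s).smul_right t),
    mulVec_mulVec]

theorem exp_neg_smul_mulVec_exp_smul_mulVec (t : ℝ) (x₀ : ι → ℝ) :
    exp ((-t) • A) *ᵥ (exp (t • A) *ᵥ x₀) = x₀ := by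
  rw [← exp_add_smul_mulVec, neg_add_cancel, zero_smul, exp_zero, one_mulVec]

end LinearFlow

section Observability

variable {ι κ : Type*} [Fintype ι] [Fintype κ] [DecidableEq ι] {A : Matrix ι ι ℝ}
  {C : Matrix κ ι ℝ} {y : ι → ℝ} {U : Set ℝ}

theorem mul_pow_mulVec_exp_smul_mulVec_eq_zero (hU : IsOpen U)
    (h : ∀ t ∈ U, C *ᵥ (exp (t • A) *ᵥ y) = 0) (k : ℕ) :
    ∀ t ∈ U, (C * A ^ k) *ᵥ (exp (t • A) *ᵥ y) = 0 := by
  induction k with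
  | zero => simpa using h
  | succ k ih =>
    intro t ht
    have hderiv := (hasDerivAt_exp_smul_mulVec A y t).matrix_mulVec (C * A ^ k)
    rw [pow_succ, ← Matrix.mul_assoc, ← mulVec_mulVec]
    exact hderiv.eq_zero_of_eventuallyEq_const (eventually_of_mem (hU.mem_nhds ht) ih)

theorem eq_zero_of_mulVec_exp_smul_mulVec_eqOn_zero
    (hobs : ∀ x : ι → ℝ, (∀ k : ℕ, (C * A ^ k) *ᵥ x = 0) → x = 0) (hU : IsOpen U) {t₀ : ℝ}
    (ht₀ : t₀ ∈ U) (h : ∀ t ∈ U, C *ᵥ (exp (t • A) *ᵥ y) = 0) : y = 0 := by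
  have hx : exp (t₀ • A) *ᵥ y = 0 :=
    hobs _ fun k => mul_pow_mulVec_exp_smul_mulVec_eq_zero hU h k t₀ ht₀
  rw [← exp_neg_smul_mulVec_exp_smul_mulVec A t₀ y, hx, mulVec_zero]

end Observability

section Lyapunov

variable {ι : Type*} [Fintype ι]

theorem smul_dotProduct_mulVec_smul {R : Type*} [CommSemiring R] (M : Matrix ι ι R) (c : R)
    (y : ι → R) :
    (c • y) ⬝ᵥ M *ᵥ (c • y) = c ^ 2 * (y ⬝ᵥ M *ᵥ y) := by
  rw [mulVec_smul, dotProduct_smul, smul_dotProduct, smul_eq_mul, smul_eq_mul, ← mul_assoc, sq]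

theorem continuous_dotProduct_mulVec_self {R : Type*} [CommSemiring R] [TopologicalSpace R]
    [IsTopologicalSemiring R] (M : Matrix ι ι R) :
    Continuous fun y : ι → R => y ⬝ᵥ M *ᵥ y :=
  continuous_id.dotProduct (continuous_const.matrix_mulVec continuous_id)

variable {A Q S : Matrix ι ι ℝ}

theorem HasDerivAt.dotProduct_mulVec_of_lyapunov (hlyap : Q * A + Aᵀ * Q = -S)
    {x : ℝ → ι → ℝ} {t : ℝ} (hx : HasDerivAt x (A *ᵥ x t) t) :
    HasDerivAt (fun s => x s ⬝ᵥ Q *ᵥ x s) (-(x t ⬝ᵥ S *ᵥ x t)) t := by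
  refine (hx.dotProduct (hx.matrix_mulVec Q)).congr_deriv ?_
  rw [← dotProduct_neg, ← neg_mulVec, ← hlyap, add_mulVec, dotProduct_add, ← mulVec_mulVec,
    ← mulVec_mulVec, dotProduct_mulVec (x t) Aᵀ, vecMul_transpose, add_comm]

variable [DecidableEq ι]

theorem antitone_dotProduct_mulVec_exp_smul_mulVec (hS : S.PosSemidef)
    (hlyap : Q * A + Aᵀ * Q = -S) (x₀ : ι → ℝ) :
    Antitone fun t : ℝ => (exp (t • A) *ᵥ x₀) ⬝ᵥ Q *ᵥ (exp (t • A) *ᵥ x₀) := by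
  have hV := fun t => (hasDerivAt_exp_smul_mulVec A x₀ t).dotProduct_mulVec_of_lyapunov hlyap
  refine antitone_of_deriv_nonpos (fun t => (hV t).differentiableAt) fun t => ?_
  rw [(hV t).deriv, neg_nonpos]
  simpa using hS.dotProduct_mulVec_nonneg (exp (t • A) *ᵥ x₀)

theorem dotProduct_mulVec_exp_mulVec_lt (hS : S.PosSemidef) (hlyap : Q * A + Aᵀ * Q = -S)
    (hobs : ∀ x : ι → ℝ, (∀ k : ℕ, (S * A ^ k) *ᵥ x = 0) → x = 0) {y : ι → ℝ} (hy : y ≠ 0) :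
    (exp A *ᵥ y) ⬝ᵥ Q *ᵥ (exp A *ᵥ y) < y ⬝ᵥ Q *ᵥ y := by
  set V := fun t : ℝ => (exp (t • A) *ᵥ y) ⬝ᵥ Q *ᵥ (exp (t • A) *ᵥ y)
  have hanti : Antitone V := antitone_dotProduct_mulVec_exp_smul_mulVec hS hlyap y
  have hV0 : V 0 = y ⬝ᵥ Q *ᵥ y := by simp [V]
  have hV1 : V 1 = (exp A *ᵥ y) ⬝ᵥ Q *ᵥ (exp A *ᵥ y) := by simp [V]
  rw [← hV0, ← hV1]
  refine (hanti zero_le_one).lt_of_ne fun hconst => hy ?_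
  refine eq_zero_of_mulVec_exp_smul_mulVec_eqOn_zero hobs isOpen_Ioo
    (show (1 / 2 : ℝ) ∈ Set.Ioo 0 1 by norm_num) fun t ht => ?_
  have hVt : ∀ s ∈ Set.Ioo (0 : ℝ) 1, V s = V 0 := fun s hs =>
    le_antisymm (hanti hs.1.le) (hconst ▸ hanti hs.2.le)
  have hderiv := (hasDerivAt_exp_smul_mulVec A y t).dotProduct_mulVec_of_lyapunov hlyap
  have hzero := hderiv.eq_zero_of_eventuallyEq_const
    (eventually_of_mem (isOpen_Ioo.mem_nhds ht) hVt)
  rw [neg_eq_zero, ← star_trivial (exp (t • A) *ᵥ y)] at hzero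
  exact (hS.dotProduct_mulVec_zero_iff _).1 hzero

end Lyapunov

section Stability

variable {ι : Type*} [Fintype ι] [DecidableEq ι] {A Q S : Matrix ι ι ℝ}

theorem tendsto_exp_smul_mulVec_atTop_zero (hQ : Q.PosSemidef) (hS : S.PosSemidef)
    (hlyap : Q * A + Aᵀ * Q = -S)
    (hobs : ∀ x : ι → ℝ, (∀ k : ℕ, (S * A ^ k) *ᵥ x = 0) → x = 0) (x₀ : ι → ℝ) :
    Tendsto (fun t : ℝ => exp (t • A) *ᵥ x₀) atTop (𝓝 0) := by
  set x := fun t : ℝ => exp (t • A) *ᵥ x₀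
  set V := fun t : ℝ => x t ⬝ᵥ Q *ᵥ x t
  obtain ⟨c, hc, hdecr⟩ := exists_pos_mul_sq_norm_le_of_homogeneous
    (f := fun y => y ⬝ᵥ Q *ᵥ y - (exp A *ᵥ y) ⬝ᵥ Q *ᵥ (exp A *ᵥ y))
    (by fun_prop)
    (fun c y => by
      rw [smul_dotProduct_mulVec_smul, mulVec_smul, smul_dotProduct_mulVec_smul, mul_sub])
    (fun y hy => sub_pos.2 (dotProduct_mulVec_exp_mulVec_lt hS hlyap hobs hy))
  have hV : Tendsto V atTop (𝓝 (⨅ t, V t)) :=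
    tendsto_atTop_ciInf (antitone_dotProduct_mulVec_exp_smul_mulVec hS hlyap x₀)
      ⟨0, by rintro _ ⟨t, rfl⟩; simpa using hQ.dotProduct_mulVec_nonneg (x t)⟩
  have hVdiff : Tendsto (fun t => V t - V (t + 1)) atTop (𝓝 0) := by
    simpa using hV.sub (hV.comp (tendsto_atTop_add_const_right _ 1 tendsto_id))
  have hshift (t : ℝ) : V (t + 1) = (exp A *ᵥ x t) ⬝ᵥ Q *ᵥ (exp A *ᵥ x t) := by
    simp only [V, x, add_comm t 1, exp_add_smul_mulVec, one_smul]
  have hbound (t : ℝ) : ‖x t‖ ^ 2 ≤ (V t - V (t + 1)) / c := by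
    rw [le_div_iff₀' hc, hshift]
    exact hdecr (x t)
  have hsq : Tendsto (fun t => ‖x t‖ ^ 2) atTop (𝓝 0) :=
    squeeze_zero (fun _ => by positivity) hbound (by simpa using hVdiff.div_const c)
  rw [tendsto_zero_iff_norm_tendsto_zero]
  simpa using hsq.sqrt

theorem exists_forall_norm_exp_smul_mulVec_lt (hQ : Q.PosDef) (hS : S.PosSemidef)
    (hlyap : Q * A + Aᵀ * Q = -S) {ε : ℝ} (hε : 0 < ε) :
    ∃ δ > 0, ∀ x₀ : ι → ℝ, ‖x₀‖ < δ → ∀ t : ℝ, 0 ≤ t → ‖exp (t • A) *ᵥ x₀‖ < ε := by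
  obtain ⟨c, hc, hcQ⟩ := exists_pos_mul_sq_norm_le_of_homogeneous
    (continuous_dotProduct_mulVec_self Q) (smul_dotProduct_mulVec_smul Q)
    (fun y hy => by simpa using hQ.dotProduct_mulVec_pos hy)
  obtain ⟨δ, hδ, hsmall⟩ := Metric.continuousAt_iff.1
    (continuous_dotProduct_mulVec_self Q).continuousAt (c * ε ^ 2) (by positivity)
  refine ⟨δ, hδ, fun x₀ hx₀ t ht => ?_⟩
  have hV0 : x₀ ⬝ᵥ Q *ᵥ x₀ < c * ε ^ 2 := by
    have h := hsmall (x := x₀) (by rwa [dist_zero_right])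
    rw [mulVec_zero, dotProduct_zero, Real.dist_eq, sub_zero] at h
    exact (le_abs_self _).trans_lt h
  have hsq : c * ‖exp (t • A) *ᵥ x₀‖ ^ 2 < c * ε ^ 2 :=
    calc c * ‖exp (t • A) *ᵥ x₀‖ ^ 2 ≤ (exp (t • A) *ᵥ x₀) ⬝ᵥ Q *ᵥ (exp (t • A) *ᵥ x₀) :=
          hcQ _
      _ ≤ x₀ ⬝ᵥ Q *ᵥ x₀ := by
          simpa using antitone_dotProduct_mulVec_exp_smul_mulVec hS hlyap x₀ ht
      _ < c * ε ^ 2 := hV0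
  exact (pow_lt_pow_iff_left₀ (norm_nonneg _) hε.le two_ne_zero).1
    (lt_of_mul_lt_mul_left hsq hc.le)

end Stability

/-- LaSalle invariance principle for linear systems: if `Q ≻ 0`,
`QA + AᵀQ = -S` with `S ⪰ 0`, and the only vector annihilated by `S·Aᵏ` for all
`k ≥ 0` is zero, then every solution of `dx/dt = Ax` converges to the origin,
and the origin is (Lyapunov) stable, hence asymptotically stable. -/
theorem lasalle_linear_asymptotic_stability
    {n : ℕ} (A Q S : Matrix (Fin n) (Fin n) ℝ)
    (hQ : Q.PosDef) (hS : S.PosSemidef)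
    (hlyap : Q * A + Aᵀ * Q = -S)
    (hobs : ∀ x : Fin n → ℝ, (∀ k : ℕ, (S * A ^ k).mulVec x = 0) → x = 0) :
    (∀ x0 : Fin n → ℝ,
       Filter.Tendsto (fun t : ℝ => (NormedSpace.exp (t • A)).mulVec x0)
         Filter.atTop (nhds 0)) ∧
    (∀ ε : ℝ, 0 < ε → ∃ δ : ℝ, 0 < δ ∧ ∀ x0 : Fin n → ℝ, ‖x0‖ < δ →
       ∀ t : ℝ, 0 ≤ t → ‖(NormedSpace.exp (t • A)).mulVec x0‖ < ε) :=
  ⟨tendsto_exp_smul_mulVec_atTop_zero hQ.posSemidef hS hlyap hobs,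
    fun _ hε => exists_forall_norm_exp_smul_mulVec_lt hQ hS hlyap hε⟩
end
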